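/- For every edge e of a finite simple graph G, the theta-numbers satisfy θ(G/e) ≤ θ(G) ≤ θ(G/e) + 1, where G/e is the graph obtained from G by contracting the edge e. -/

import Mathlib

/-!
Work with `θ` of induced subgraphs `G[S]`: the deletion and link of `v` in `Ind(G[S])` are
`Ind(G[S - v])` and `Ind(G[S \ N[v]])`. Isolated vertices are cone points and do not change `θ`;
with this, `θ` is monotone under induced subgraphs and deleting a vertex lowers `θ` by at most one.
In `G' = G/xy` the merged vertex is `x` and `y` is isolated, so `G'[T] = G[T - y]` whenever
`x ∉ T`.

Upper bound: branching at `x`, `θ(G) ≤ max(θ(G - x), θ(G - N[x]) + 1)`, and `G - x - y` and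
`G - N[x]` are induced subgraphs of `G'`.

Lower bound, by induction on `S ∋ y`: branch `G[S]` at an optimal vertex `w`. If `w ∈ {x, y}`,
branching `G'[S]` at `x` does at least as well, since `G' - x = G - x - y` and
`G' - N[x] = G - N[x] - N[y]`. Otherwise branch `G'[S]` at `w` and use induction; if `w` sees `x`
or `y`, then `G' - N[w]` misses `x` and is an induced subgraph of `G - N[w]` once `y` is removed.
-/

namespace ThetaPaper

variable {α : Type*} [DecidableEq α]

def delF (X : Finset (Finset α)) (v : α) : Finset (Finset α) :=
  X.filter fun S => v ∉ S

def lkF (X : Finset (Finset α)) (v : α) : Finset (Finset α) :=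
  X.filter fun T => v ∉ T ∧ insert v T ∈ X

def vertF (X : Finset (Finset α)) : Finset α := X.biUnion id

def nonConeF (X : Finset (Finset α)) : Finset α :=
  (vertF X).filter fun v => delF X v ≠ lkF X v

lemma delF_card_lt {X : Finset (Finset α)} {v : α} (h : v ∈ nonConeF X) :
    (delF X v).card < X.card := by
  obtain ⟨A, hA, hvA⟩ := Finset.mem_biUnion.mp (Finset.mem_filter.mp h).1
  refine Finset.card_lt_card ⟨Finset.filter_subset _ _, fun hsub => ?_⟩
  have h2 := hsub hA
  rw [delF, Finset.mem_filter] at h2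
  exact h2.2 hvA

lemma lkF_card_lt {X : Finset (Finset α)} {v : α} (h : v ∈ nonConeF X) :
    (lkF X v).card < X.card := by
  obtain ⟨A, hA, hvA⟩ := Finset.mem_biUnion.mp (Finset.mem_filter.mp h).1
  refine Finset.card_lt_card ⟨Finset.filter_subset _ _, fun hsub => ?_⟩
  have h2 := hsub hA
  rw [lkF, Finset.mem_filter] at h2
  exact h2.2.1 hvA

def theta (X : Finset (Finset α)) : ℕ :=
  if h : (nonConeF X).Nonempty then
    (nonConeF X).attach.inf' (Finset.attach_nonempty_iff.mpr h) fun v =>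
      max (theta (delF X v.1)) (theta (lkF X v.1) + 1)
  else 0
termination_by X.card
decreasing_by
  · exact delF_card_lt v.2
  · exact lkF_card_lt v.2

def IsComplex (X : Finset (Finset α)) : Prop :=
  ∀ A ∈ X, ∀ B, B ⊆ A → B ∈ X

/-- `dim(X)`, as an integer: the maximum of `|A| - 1` over faces `A ∈ X`. -/
noncomputable def dimZ (X : Finset (Finset α)) : ℤ :=
  sSup {d : ℤ | ∃ A ∈ X, d = (A.card : ℤ) - 1}

/-- A circuit (minimal non-face) of `X`. -/
def IsCircuit (X : Finset (Finset α)) (S : Finset α) : Prop :=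
  S ∉ X ∧ ∀ T ⊂ S, T ∈ X

/-- A circuit cover of `X`. -/
def IsCircuitCover (X : Finset (Finset α)) (C : Finset α) : Prop :=
  ∀ S : Finset α, IsCircuit X S → (S.card : ℤ) - 1 ≤ ((S ∩ C).card : ℤ)

/-- The circuit cover number `ccn(X)` of a complex with vertex set `V`. -/
noncomputable def ccnZ (V : Finset α) (X : Finset (Finset α)) : ℤ :=
  sInf {k : ℤ | ∃ C ⊆ V, IsCircuitCover X C ∧
    k = dimZ (X.filter fun A => A ⊆ C) + 1}

/-- The simplicial join. -/
def joinF (X₁ X₂ : Finset (Finset α)) : Finset (Finset α) :=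
  X₁.biUnion fun A => X₂.image fun B => A ∪ B

/-- A facet (maximal face) of `X`. -/
def IsFacet (X : Finset (Finset α)) (B : Finset α) : Prop :=
  B ∈ X ∧ ∀ C ∈ X, B ⊆ C → C = B

/-- An elementary `k`-collapse: remove the interval `[A, B]` where `A` is a face of size
at most `k` contained in the unique facet `B`. -/
def ElemCollapse (k : ℕ) (X Y : Finset (Finset α)) : Prop :=
  ∃ A B : Finset α, A ∈ X ∧ A.card ≤ k ∧ IsFacet X B ∧ A ⊆ B ∧
    (∀ C, IsFacet X C → A ⊆ C → C = B) ∧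
    Y = X.filter fun C => ¬ (A ⊆ C ∧ C ⊆ B)

/-- `X` is `k`-collapsible: it reduces to the void complex by elementary `k`-collapses. -/
def Collapsible (k : ℕ) (X : Finset (Finset α)) : Prop :=
  Relation.ReflTransGen (ElemCollapse k) X ∅

/-- The collapsibility number `C(X)`. -/
noncomputable def collapseNum (X : Finset (Finset α)) : ℕ :=
  sInf {k : ℕ | Collapsible k X}

/-- `k(X)`: the maximum size of a set `{x₁, …, x_k}` of vertices of `X` admitting facets
`A₁, …, A_{k+1}` with `x_i ∉ A_i` and `x_i ∈ A_j` for `i < j`. -/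
noncomputable def kNum (X : Finset (Finset α)) : ℕ :=
  sSup {k : ℕ | ∃ (x : Fin k → α) (A : Fin (k + 1) → Finset α),
    Function.Injective x ∧ (∀ i, {x i} ∈ X) ∧ (∀ j, IsFacet X (A j)) ∧
    (∀ i : Fin k, x i ∉ A i.castSucc) ∧
    (∀ (i : Fin k) (j : Fin (k + 1)), (i : ℕ) < (j : ℕ) → x i ∈ A j)}

/-- Vertex decomposable simplicial complexes. -/
inductive VertexDecomposable : Finset (Finset α) → Prop
  | simplex (S : Finset α) : VertexDecomposable S.powerset
  | shed (X : Finset (Finset α)) (v : α) (hv : {v} ∈ X)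
      (hdel : VertexDecomposable (delF X v)) (hlk : VertexDecomposable (lkF X v))
      (hfacet : ∀ B, IsFacet (delF X v) B → IsFacet X B) : VertexDecomposable X

section Graphs

variable {V : Type*} [Fintype V] [DecidableEq V]

open Classical in
/-- The independence complex of a graph, as a `Finset` of faces. -/
noncomputable def indComplex (G : SimpleGraph V) : Finset (Finset V) :=
  Finset.univ.powerset.filter fun A => ∀ x ∈ A, ∀ y ∈ A, ¬ G.Adj x y

/-- The theta-number of a graph: the theta-number of its independence complex. -/
noncomputable def thetaG (G : SimpleGraph V) : ℕ := theta (indComplex G)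

/-- A graph is chordal if it has no induced cycle of length greater than `3`. -/
def Chordal {W : Type*} (G : SimpleGraph W) : Prop :=
  ∀ n : ℕ, 3 < n → IsEmpty (SimpleGraph.cycleGraph n ↪g G)

/-- Contraction of the edge `xy`: the merged vertex is `x`, and `y` becomes isolated
(isolated vertices are irrelevant for the independence complex/theta-number). -/
def contractEdge (G : SimpleGraph V) (x y : V) : SimpleGraph V where
  Adj a b := a ≠ b ∧ a ≠ y ∧ b ≠ y ∧
    ((a = x ∧ (G.Adj x b ∨ G.Adj y b)) ∨
     (b = x ∧ (G.Adj a x ∨ G.Adj a y)) ∨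
     (a ≠ x ∧ b ≠ x ∧ G.Adj a b))
  symm := by
    constructor
    rintro a b ⟨hab, hay, hby, h⟩
    refine ⟨Ne.symm hab, hby, hay, ?_⟩
    rcases h with ⟨ha, h⟩ | ⟨hb, h⟩ | ⟨ha, hb, h⟩
    · exact Or.inr (Or.inl ⟨ha, h.imp (fun t => t.symm) (fun t => t.symm)⟩)
    · exact Or.inl ⟨hb, h.imp (fun t => t.symm) (fun t => t.symm)⟩
    · exact Or.inr (Or.inr ⟨hb, ha, h.symm⟩)
  loopless := ⟨by rintro a ⟨h, -⟩; exact h rfl⟩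

/-- One edge-contraction step: `H` is obtained from `G` by contracting an edge of `G`. -/
def ContractionStep (G H : SimpleGraph V) : Prop :=
  ∃ x y, G.Adj x y ∧ H = contractEdge G x y

/-- A matching of `G` (a set of pairwise disjoint edges). -/
def IsMatching (G : SimpleGraph V) (M : Finset (Sym2 V)) : Prop :=
  (∀ e ∈ M, e ∈ G.edgeSet) ∧
    ∀ e ∈ M, ∀ f ∈ M, e ≠ f → ∀ x, x ∈ e → x ∉ f

/-- An induced matching of `G`: a matching such that no two vertices belonging to
different edges of it are adjacent. -/
def IsInducedMatching (G : SimpleGraph V) (M : Finset (Sym2 V)) : Prop :=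
  IsMatching G M ∧ ∀ e ∈ M, ∀ f ∈ M, e ≠ f → ∀ x ∈ e, ∀ y ∈ f, ¬ G.Adj x y

/-- The induced matching number `im(G)`. -/
noncomputable def inducedMatchingNum (G : SimpleGraph V) : ℕ :=
  sSup {k : ℕ | ∃ M, IsInducedMatching G M ∧ M.card = k}

/-- A maximal matching. -/
def IsMaximalMatching (G : SimpleGraph V) (M : Finset (Sym2 V)) : Prop :=
  IsMatching G M ∧ ∀ N, IsMatching G N → M ⊆ N → N = M

/-- `min-m(G)`: the minimum size of a maximal matching. -/
noncomputable def minMaximalMatchingNum (G : SimpleGraph V) : ℕ :=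
  sInf {k : ℕ | ∃ M, IsMaximalMatching G M ∧ M.card = k}

/-- Independent (stable) sets of a graph. -/
def IsIndepSet (G : SimpleGraph V) (A : Finset V) : Prop :=
  ∀ x ∈ A, ∀ y ∈ A, ¬ G.Adj x y

/-- A vertex cover. -/
def IsVertexCover (G : SimpleGraph V) (C : Finset V) : Prop :=
  ∀ x y, G.Adj x y → x ∈ C ∨ y ∈ C

/-- `α(G[F])`: the maximum size of an independent set of `G` contained in `F`. -/
noncomputable def indepNumOn (G : SimpleGraph V) (F : Finset V) : ℕ :=
  sSup {k : ℕ | ∃ A ⊆ F, IsIndepSet G A ∧ A.card = k}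

/-- The circuit cover number of a graph: `ccn(G) = min{α(G[F]) : F a vertex cover}`. -/
noncomputable def ccnG (G : SimpleGraph V) : ℕ :=
  sInf {k : ℕ | ∃ F, IsVertexCover G F ∧ k = indepNumOn G F}

open Classical in
/-- The closed neighborhood of a vertex, as a `Finset`. -/
noncomputable def closedNbhd (G : SimpleGraph V) (x : V) : Finset V :=
  Finset.univ.filter fun z => z = x ∨ G.Adj x z

/-- The maximum privacy degree `Γ(G) = max{|N[x] \ N[y]| : xy ∈ E(G)}`. -/
noncomputable def privacyDeg (G : SimpleGraph V) : ℕ :=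
  sSup {k : ℕ | ∃ x y, G.Adj x y ∧ k = (closedNbhd G x \ closedNbhd G y).card}

open Classical in
/-- The maximum degree `Δ(G)`. -/
noncomputable def maxDeg (G : SimpleGraph V) : ℕ :=
  sSup {k : ℕ | ∃ v, k = (Finset.univ.filter fun z => G.Adj v z).card}

end Graphs

open Classical in
/-- `V(M)`: the set of vertices incident to the edges of `M`. -/
noncomputable def matchVerts {V : Type*} [Fintype V] (M : Finset (Sym2 V)) : Finset V :=
  Finset.univ.filter fun x => ∃ e ∈ M, x ∈ e

variable {X : Finset (Finset α)}

theorem theta_le_max {v : α} (hv : v ∈ nonConeF X) :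
    theta X ≤ max (theta (delF X v)) (theta (lkF X v) + 1) := by
  rw [theta, dif_pos ⟨v, hv⟩]
  exact Finset.inf'_le _ (Finset.mem_attach _ ⟨v, hv⟩)

theorem exists_theta_eq_max (h : (nonConeF X).Nonempty) :
    ∃ v ∈ nonConeF X, theta X = max (theta (delF X v)) (theta (lkF X v) + 1) := by
  rw [theta, dif_pos h]
  obtain ⟨v, -, hv⟩ := Finset.exists_mem_eq_inf' (Finset.attach_nonempty_iff.mpr h)
    fun v : nonConeF X => max (theta (delF X v.1)) (theta (lkF X v.1) + 1)
  exact ⟨v.1, v.2, hv⟩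

theorem theta_eq_zero (h : ¬ (nonConeF X).Nonempty) : theta X = 0 := by
  rw [theta, dif_neg h]

theorem theta_le_of_nonConeF_eq {Y : Finset (Finset α)} (h : nonConeF X = nonConeF Y)
    (hdel : ∀ v ∈ nonConeF X, theta (delF X v) ≤ theta (delF Y v))
    (hlk : ∀ v ∈ nonConeF X, theta (lkF X v) ≤ theta (lkF Y v)) :
    theta X ≤ theta Y := by
  by_cases hY : (nonConeF Y).Nonempty
  · obtain ⟨v, hv, hθ⟩ := exists_theta_eq_max hY
    rw [← h] at hv
    exact hθ ▸ (theta_le_max hv).trans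
      (max_le_max (hdel v hv) (Nat.add_le_add_right (hlk v hv) 1))
  · rw [theta_eq_zero (h ▸ hY)]
    exact Nat.zero_le _

theorem theta_eq_of_nonConeF_eq {Y : Finset (Finset α)} (h : nonConeF X = nonConeF Y)
    (hdel : ∀ v ∈ nonConeF X, theta (delF X v) = theta (delF Y v))
    (hlk : ∀ v ∈ nonConeF X, theta (lkF X v) = theta (lkF Y v)) :
    theta X = theta Y :=
  le_antisymm (theta_le_of_nonConeF_eq h (fun v hv => (hdel v hv).le) fun v hv => (hlk v hv).le)
    (theta_le_of_nonConeF_eq h.symm (fun v hv => (hdel v (h ▸ hv)).ge)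
      fun v hv => (hlk v (h ▸ hv)).ge)

section IndependenceComplex

variable {V : Type*} {G H : SimpleGraph V} {S T : Finset V} {u v : V}

open Classical in
noncomputable def indComplexOn (G : SimpleGraph V) (S : Finset V) : Finset (Finset V) :=
  S.powerset.filter fun A => ∀ a ∈ A, ∀ b ∈ A, ¬ G.Adj a b

open Classical in
noncomputable def outsideNbhd (G : SimpleGraph V) (S : Finset V) (v : V) : Finset V :=
  S.filter fun u => u ≠ v ∧ ¬ G.Adj v u

theorem mem_indComplexOn {A : Finset V} :
    A ∈ indComplexOn G S ↔ A ⊆ S ∧ ∀ a ∈ A, ∀ b ∈ A, ¬ G.Adj a b := by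
  simp [indComplexOn]

theorem mem_outsideNbhd : u ∈ outsideNbhd G S v ↔ u ∈ S ∧ u ≠ v ∧ ¬ G.Adj v u := by
  simp [outsideNbhd]

theorem outsideNbhd_subset : outsideNbhd G S v ⊆ S :=
  fun _ hu => (mem_outsideNbhd.mp hu).1

theorem outsideNbhd_mono (h : S ⊆ T) : outsideNbhd G S v ⊆ outsideNbhd G T v :=
  fun _ hu => mem_outsideNbhd.mpr ⟨h (mem_outsideNbhd.mp hu).1, (mem_outsideNbhd.mp hu).2⟩

theorem singleton_mem_indComplexOn (hv : v ∈ S) : {v} ∈ indComplexOn G S := by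
  simp [mem_indComplexOn, hv]

variable [DecidableEq V]

noncomputable def thetaOn (G : SimpleGraph V) (S : Finset V) : ℕ := theta (indComplexOn G S)

theorem outsideNbhd_subset_erase : outsideNbhd G S v ⊆ S.erase v := fun _ hu =>
  Finset.mem_erase.mpr ⟨(mem_outsideNbhd.mp hu).2.1, (mem_outsideNbhd.mp hu).1⟩

theorem outsideNbhd_ssubset (hv : v ∈ S) : outsideNbhd G S v ⊂ S :=
  outsideNbhd_subset_erase.trans_ssubset (Finset.erase_ssubset hv)

theorem outsideNbhd_erase : outsideNbhd G (S.erase u) v = (outsideNbhd G S v).erase u := by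
  ext w
  simp only [mem_outsideNbhd, Finset.mem_erase]
  tauto

theorem outsideNbhd_eq_erase (h : ∀ u ∈ S, ¬ G.Adj v u) : outsideNbhd G S v = S.erase v := by
  ext u
  simp only [mem_outsideNbhd, Finset.mem_erase]
  exact ⟨fun hu => ⟨hu.2.1, hu.1⟩, fun hu => ⟨hu.2, hu.1, h u hu.2⟩⟩

theorem delF_indComplexOn : delF (indComplexOn G S) v = indComplexOn G (S.erase v) := by
  ext A
  simp only [delF, Finset.mem_filter, mem_indComplexOn, Finset.subset_erase]
  tauto

theorem lkF_indComplexOn (hv : v ∈ S) :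
    lkF (indComplexOn G S) v = indComplexOn G (outsideNbhd G S v) := by
  ext A
  simp only [lkF, Finset.mem_filter, mem_indComplexOn, Finset.forall_mem_insert, Finset.subset_iff,
    mem_outsideNbhd]
  constructor
  · rintro ⟨⟨-, hind⟩, hvA, ⟨-, hAS⟩, ⟨-, hvind⟩, -⟩
    exact ⟨fun u hu => ⟨hAS hu, fun h => hvA (h ▸ hu), hvind u hu⟩, hind⟩
  · rintro ⟨hA, hind⟩
    exact ⟨⟨fun u hu => (hA hu).1, hind⟩, fun hvA => (hA hvA).2.1 rfl,
      ⟨hv, fun u hu => (hA hu).1⟩, ⟨G.loopless.irrefl v, fun u hu => (hA hu).2.2⟩,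
      fun u hu => ⟨fun h => (hA hu).2.2 h.symm, hind u hu⟩⟩

theorem vertF_indComplexOn : vertF (indComplexOn G S) = S := by
  ext v
  simp only [vertF, Finset.mem_biUnion, id]
  exact ⟨fun ⟨A, hA, hv⟩ => (mem_indComplexOn.mp hA).1 hv,
    fun hv => ⟨{v}, singleton_mem_indComplexOn hv, Finset.mem_singleton_self v⟩⟩

theorem mem_nonConeF_indComplexOn :
    v ∈ nonConeF (indComplexOn G S) ↔ v ∈ S ∧ ∃ u ∈ S, G.Adj v u := by
  simp only [nonConeF, Finset.mem_filter, vertF_indComplexOn]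
  refine and_congr_right fun hv => ?_
  rw [delF_indComplexOn, lkF_indComplexOn hv]
  constructor
  · intro hne
    by_contra! hiso
    exact hne (by rw [outsideNbhd_eq_erase hiso])
  · rintro ⟨u, hu, hadj⟩ heq
    have hu' : {u} ∈ indComplexOn G (S.erase v) :=
      singleton_mem_indComplexOn (Finset.mem_erase.mpr ⟨G.ne_of_adj hadj.symm, hu⟩)
    rw [heq, mem_indComplexOn, Finset.singleton_subset_iff, mem_outsideNbhd] at hu'
    exact hu'.1.2.2 hadj

theorem thetaOn_le_max_of_adj (hv : v ∈ S) (hu : u ∈ S) (hadj : G.Adj v u) :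
    thetaOn G S ≤ max (thetaOn G (S.erase v)) (thetaOn G (outsideNbhd G S v) + 1) := by
  have h := theta_le_max (mem_nonConeF_indComplexOn.mpr ⟨hv, u, hu, hadj⟩)
  rwa [delF_indComplexOn, lkF_indComplexOn hv] at h

theorem exists_thetaOn_eq_max (hv : v ∈ S) (hu : u ∈ S) (hadj : G.Adj v u) :
    ∃ w ∈ S, thetaOn G S =
      max (thetaOn G (S.erase w)) (thetaOn G (outsideNbhd G S w) + 1) := by
  obtain ⟨w, hw, h⟩ :=
    exists_theta_eq_max ⟨v, mem_nonConeF_indComplexOn.mpr ⟨hv, u, hu, hadj⟩⟩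
  have hwS := (mem_nonConeF_indComplexOn.mp hw).1
  rw [delF_indComplexOn, lkF_indComplexOn hwS] at h
  exact ⟨w, hwS, h⟩

theorem thetaOn_eq_zero (h : ∀ v ∈ S, ∀ u ∈ S, ¬ G.Adj v u) : thetaOn G S = 0 :=
  theta_eq_zero fun ⟨v, hv⟩ =>
    have ⟨hvS, u, hu, hadj⟩ := mem_nonConeF_indComplexOn.mp hv
    h v hvS u hu hadj

theorem thetaOn_congr (h : ∀ a ∈ S, ∀ b ∈ S, G.Adj a b ↔ H.Adj a b) :
    thetaOn G S = thetaOn H S := by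
  unfold thetaOn
  congr 1
  ext A
  simp only [mem_indComplexOn]
  refine and_congr_right fun hA => ?_
  exact forall₂_congr fun a ha => forall₂_congr fun b hb => not_congr (h a (hA ha) b (hA hb))

theorem thetaOn_erase_of_forall_not_adj (h : ∀ u ∈ S, ¬ G.Adj v u) :
    thetaOn G (S.erase v) = thetaOn G S := by
  induction S using Finset.strongInduction with
  | H S ih =>
  by_cases hv : v ∈ S
  swap
  · rw [Finset.erase_eq_of_notMem hv]
  have hcone : nonConeF (indComplexOn G (S.erase v)) = nonConeF (indComplexOn G S) := by
    ext w
    simp only [mem_nonConeF_indComplexOn, Finset.mem_erase]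
    constructor
    · rintro ⟨⟨-, hw⟩, u, ⟨-, hu⟩, hadj⟩
      exact ⟨hw, u, hu, hadj⟩
    · rintro ⟨hw, u, hu, hadj⟩
      exact ⟨⟨fun hwv => h u hu (hwv ▸ hadj), hw⟩, u,
        ⟨fun huv => h w hw (huv ▸ hadj.symm), hu⟩, hadj⟩
  have hdel : ∀ w ∈ S, w ≠ v → thetaOn G ((S.erase v).erase w) = thetaOn G (S.erase w) := by
    intro w hw hwv
    rw [Finset.erase_right_comm]
    exact ih _ (Finset.erase_ssubset hw) fun u hu => h u (Finset.mem_of_mem_erase hu)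
  have hlk : ∀ w ∈ S, w ≠ v →
      thetaOn G (outsideNbhd G (S.erase v) w) = thetaOn G (outsideNbhd G S w) := by
    intro w hw hwv
    rw [outsideNbhd_erase]
    exact ih _ (outsideNbhd_ssubset hw) fun u hu => h u (outsideNbhd_subset hu)
  refine theta_eq_of_nonConeF_eq hcone (fun w hw => ?_) (fun w hw => ?_) <;>
    obtain ⟨hw, -⟩ := mem_nonConeF_indComplexOn.mp hw <;>
    obtain ⟨hwv, hwS⟩ := Finset.mem_erase.mp hw
  · rw [delF_indComplexOn, delF_indComplexOn]
    exact hdel w hwS hwv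
  · rw [lkF_indComplexOn hw, lkF_indComplexOn hwS]
    exact hlk w hwS hwv

theorem thetaOn_le_max (G : SimpleGraph V) (S : Finset V) (v : V) :
    thetaOn G S ≤ max (thetaOn G (S.erase v)) (thetaOn G (outsideNbhd G S v) + 1) := by
  by_cases h : ∃ u ∈ S, G.Adj v u
  · by_cases hv : v ∈ S
    · obtain ⟨u, hu, hadj⟩ := h
      exact thetaOn_le_max_of_adj hv hu hadj
    · rw [Finset.erase_eq_of_notMem hv]
      exact le_max_left _ _
  · push Not at h
    rw [thetaOn_erase_of_forall_not_adj h]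
    exact le_max_left _ _

theorem thetaOn_mono (h : S ⊆ T) : thetaOn G S ≤ thetaOn G T := by
  induction T using Finset.strongInduction generalizing S with
  | H T ih =>
  by_cases hT : ∃ v ∈ T, ∃ u ∈ T, G.Adj v u
  · obtain ⟨v, hv, u, hu, hadj⟩ := hT
    obtain ⟨w, hw, hθ⟩ := exists_thetaOn_eq_max hv hu hadj
    rw [hθ]
    exact (thetaOn_le_max G S w).trans (max_le_max
      (ih _ (Finset.erase_ssubset hw) (Finset.erase_subset_erase w h))
      (Nat.add_le_add_right (ih _ (outsideNbhd_ssubset hw) (outsideNbhd_mono h)) 1))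
  · push Not at hT
    rw [thetaOn_eq_zero fun v hv u hu => hT v (h hv) u (h hu)]
    exact Nat.zero_le _

theorem thetaOn_le_thetaOn_erase_add_one (v : V) : thetaOn G S ≤ thetaOn G (S.erase v) + 1 :=
  (thetaOn_le_max G S v).trans (max_le (Nat.le_succ _)
    (Nat.add_le_add_right (thetaOn_mono outsideNbhd_subset_erase) 1))

theorem thetaG_eq_thetaOn_univ [Fintype V] (G : SimpleGraph V) :
    thetaG G = thetaOn G Finset.univ := by
  unfold thetaG thetaOn
  congr 1
  ext A
  simp [indComplex, indComplexOn]

end IndependenceComplex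

section Contraction

variable {V : Type*} {G : SimpleGraph V} {S : Finset V} {x y u v : V}

theorem not_contractEdge_adj_snd : ¬ (contractEdge G x y).Adj y u := fun h => h.2.1 rfl

theorem contractEdge_adj_of_ne (hux : u ≠ x) (huy : u ≠ y) (hvx : v ≠ x) (hvy : v ≠ y) :
    (contractEdge G x y).Adj u v ↔ G.Adj u v := by
  simp only [contractEdge]
  grind [SimpleGraph.Adj.ne]

theorem contractEdge_adj_of_adj (hxy : x ≠ y) (hux : u ≠ x) (huy : u ≠ y)
    (h : G.Adj x u ∨ G.Adj y u) : (contractEdge G x y).Adj x u :=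
  ⟨hux.symm, hxy, huy, Or.inl ⟨rfl, h⟩⟩

theorem contractEdge_adj_iff_of_not_adj (hux : u ≠ x) (huy : u ≠ y)
    (h : ¬ (G.Adj x u ∨ G.Adj y u)) : (contractEdge G x y).Adj u v ↔ G.Adj u v := by
  simp only [contractEdge]
  grind [SimpleGraph.Adj.ne, SimpleGraph.Adj.symm]

theorem outsideNbhd_contractEdge_of_not_adj (hvx : v ≠ x) (hvy : v ≠ y)
    (h : ¬ (G.Adj x v ∨ G.Adj y v)) :
    outsideNbhd (contractEdge G x y) S v = outsideNbhd G S v := by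
  ext u
  simp only [mem_outsideNbhd, contractEdge_adj_iff_of_not_adj hvx hvy h]

variable [DecidableEq V]

theorem thetaOn_contractEdge_of_notMem (hx : x ∉ S) :
    thetaOn (contractEdge G x y) S = thetaOn G (S.erase y) := by
  rw [← thetaOn_erase_of_forall_not_adj fun u _ => not_contractEdge_adj_snd]
  refine thetaOn_congr fun a ha b hb => ?_
  obtain ⟨hay, haS⟩ := Finset.mem_erase.mp ha
  obtain ⟨hby, hbS⟩ := Finset.mem_erase.mp hb
  exact contractEdge_adj_of_ne (ne_of_mem_of_not_mem haS hx) hay (ne_of_mem_of_not_mem hbS hx)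
    hby

theorem thetaOn_contractEdge_outsideNbhd_le (hxy : x ≠ y) (hvx : v ≠ x) (hvy : v ≠ y)
    (h : G.Adj x v ∨ G.Adj y v) :
    thetaOn (contractEdge G x y) (outsideNbhd (contractEdge G x y) S v) ≤
      thetaOn G (outsideNbhd G S v) := by
  have hadj : (contractEdge G x y).Adj v x :=
    (contractEdge_adj_of_adj hxy hvx hvy h).symm
  have hx : x ∉ outsideNbhd (contractEdge G x y) S v := fun hx => (mem_outsideNbhd.mp hx).2.2 hadj
  rw [thetaOn_contractEdge_of_notMem hx]
  refine thetaOn_mono fun u hu => ?_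
  obtain ⟨huy, hu⟩ := Finset.mem_erase.mp hu
  obtain ⟨huS, huv, hvu⟩ := mem_outsideNbhd.mp hu
  exact mem_outsideNbhd.mpr ⟨huS, huv,
    (contractEdge_adj_of_ne hvx hvy (ne_of_mem_of_not_mem hu hx) huy).not.mp hvu⟩

theorem thetaOn_contractEdge_le_max (hxy : x ≠ y) :
    thetaOn (contractEdge G x y) S ≤ max (thetaOn G ((S.erase x).erase y))
      (thetaOn G (outsideNbhd G (outsideNbhd G S x) y) + 1) := by
  have hx : x ∉ outsideNbhd (contractEdge G x y) S x := fun hx => (mem_outsideNbhd.mp hx).2.1 rfl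
  refine (thetaOn_le_max _ S x).trans (max_le_max
    (thetaOn_contractEdge_of_notMem (Finset.notMem_erase x S)).le
    (Nat.add_le_add_right ((thetaOn_contractEdge_of_notMem hx).trans_le (thetaOn_mono ?_)) 1))
  intro u hu
  obtain ⟨huy, hu⟩ := Finset.mem_erase.mp hu
  obtain ⟨huS, hux, hxu⟩ := mem_outsideNbhd.mp hu
  have hnadj := mt (contractEdge_adj_of_adj hxy hux huy) hxu
  exact mem_outsideNbhd.mpr ⟨mem_outsideNbhd.mpr ⟨huS, hux, fun h => hnadj (Or.inl h)⟩, huy,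
    fun h => hnadj (Or.inr h)⟩

theorem thetaOn_le_thetaOn_contractEdge_add_one (hxy : G.Adj x y) (S : Finset V) :
    thetaOn G S ≤ thetaOn (contractEdge G x y) S + 1 := by
  have hy : y ∉ outsideNbhd G S x := fun hy => (mem_outsideNbhd.mp hy).2.2 hxy
  have hx : x ∉ outsideNbhd G S x := fun hx => (mem_outsideNbhd.mp hx).2.1 rfl
  refine (thetaOn_le_max G S x).trans (max_le ?_ (Nat.add_le_add_right ?_ 1))
  · calc thetaOn G (S.erase x) ≤ thetaOn G ((S.erase x).erase y) + 1 :=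
          thetaOn_le_thetaOn_erase_add_one y
      _ = thetaOn (contractEdge G x y) (S.erase x) + 1 := by
          rw [thetaOn_contractEdge_of_notMem (Finset.notMem_erase x S)]
      _ ≤ thetaOn (contractEdge G x y) S + 1 :=
          Nat.add_le_add_right (thetaOn_mono (Finset.erase_subset x S)) 1
  · calc thetaOn G (outsideNbhd G S x) = thetaOn (contractEdge G x y) (outsideNbhd G S x) := by
          rw [thetaOn_contractEdge_of_notMem hx, Finset.erase_eq_of_notMem hy]
      _ ≤ thetaOn (contractEdge G x y) S := thetaOn_mono outsideNbhd_subset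

theorem thetaOn_contractEdge_le (hxy : G.Adj x y) (hy : y ∈ S) :
    thetaOn (contractEdge G x y) S ≤ thetaOn G S := by
  induction S using Finset.strongInduction with
  | H S ih =>
  by_cases hx : x ∈ S
  swap
  · rw [thetaOn_contractEdge_of_notMem hx]
    exact thetaOn_mono (Finset.erase_subset y S)
  obtain ⟨w, hw, hθ⟩ := exists_thetaOn_eq_max hx hy hxy
  rw [hθ]
  have hne := G.ne_of_adj hxy
  by_cases hwx : w = x
  · subst hwx
    exact (thetaOn_contractEdge_le_max hne).trans (max_le_max
      (thetaOn_mono (Finset.erase_subset _ _))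
      (Nat.add_le_add_right (thetaOn_mono outsideNbhd_subset) 1))
  by_cases hwy : w = y
  · subst hwy
    exact (thetaOn_contractEdge_le_max hne).trans (max_le_max
      (thetaOn_mono (Finset.erase_subset_erase _ (Finset.erase_subset _ _)))
      (Nat.add_le_add_right (thetaOn_mono (outsideNbhd_mono outsideNbhd_subset)) 1))
  refine (thetaOn_le_max _ S w).trans (max_le_max
    (ih _ (Finset.erase_ssubset hw) (Finset.mem_erase.mpr ⟨Ne.symm hwy, hy⟩))
    (Nat.add_le_add_right ?_ 1))
  by_cases hadj : G.Adj x w ∨ G.Adj y w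
  · exact thetaOn_contractEdge_outsideNbhd_le hne hwx hwy hadj
  · rw [outsideNbhd_contractEdge_of_not_adj hwx hwy hadj]
    exact ih _ (outsideNbhd_ssubset hw)
      (mem_outsideNbhd.mpr ⟨hy, Ne.symm hwy, fun h => hadj (Or.inr h.symm)⟩)

end Contraction

theorem theta_contractEdge_le_and_le_succ {V : Type*} [Fintype V] [DecidableEq V] (G : SimpleGraph V)
    {x y : V} (hxy : G.Adj x y) :
    thetaG (contractEdge G x y) ≤ thetaG G ∧
      thetaG G ≤ thetaG (contractEdge G x y) + 1 := by
  rw [thetaG_eq_thetaOn_univ, thetaG_eq_thetaOn_univ]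
  exact ⟨thetaOn_contractEdge_le hxy (Finset.mem_univ y),
    thetaOn_le_thetaOn_contractEdge_add_one hxy Finset.univ⟩

end ThetaPaper
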